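/- There is no spherical design of harmonic index 4 on S⁶ ⊆ ℝ⁷ consisting of exactly 12 points, none on S⁷ ⊆ ℝ⁸ consisting of exactly 15 points, and none on S⁹ ⊆ ℝ¹⁰ consisting of exactly 22 points; that is, there are no tight harmonic index 4-designs for n = 7, 8, 10 (where the Fisher-type bound (n+1)(n+2)/6 equals 12, 15, and 22, respectively). -/

import Mathlib

open scoped BigOperators Classical

/-- The Laplacian `∑ i, ∂²/∂xᵢ²` of a multivariate polynomial. -/
noncomputable def mvLaplacian {n : ℕ} (f : MvPolynomial (Fin n) ℝ) : MvPolynomial (Fin n) ℝ :=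
  ∑ i, MvPolynomial.pderiv i (MvPolynomial.pderiv i f)


open MvPolynomial

noncomputable def linF {n : ℕ} (y : Fin n → ℝ) : MvPolynomial (Fin n) ℝ :=
  ∑ i, MvPolynomial.C (y i) * MvPolynomial.X i

noncomputable def sqF (n : ℕ) : MvPolynomial (Fin n) ℝ :=
  ∑ i, MvPolynomial.X i ^ 2

lemma pderiv_linF {n : ℕ} (y : Fin n → ℝ) (i : Fin n) :
    pderiv i (linF y) = C (y i) := by
  rw [linF, map_sum]
  rw [Finset.sum_eq_single i]
  · simp [pderiv_X_self]
  · intro j _ hj; simp [pderiv_X_of_ne hj]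
  · simp

lemma pderiv_sqF {n : ℕ} (i : Fin n) :
    pderiv i (sqF n) = 2 * X i := by
  rw [sqF, map_sum]
  rw [Finset.sum_eq_single i]
  · rw [Derivation.leibniz_pow]; simp [pderiv_X_self]
  · intro j _ hj
    rw [Derivation.leibniz_pow]; simp [pderiv_X_of_ne hj]
  · simp

lemma pderiv_nat {n : ℕ} (i : Fin n) (k : ℕ) :
    pderiv i ((k : MvPolynomial (Fin n) ℝ)) = 0 :=
  Derivation.map_natCast (pderiv i) k

lemma sum_C_sq {n : ℕ} (y : Fin n → ℝ) :
    (∑ i, (C (y i) : MvPolynomial (Fin n) ℝ)^2) = C (∑ i, y i ^ 2) := by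
  rw [map_sum]; exact Finset.sum_congr rfl fun i _ => by rw [map_pow]

lemma lap_L4 {n : ℕ} (y : Fin n → ℝ) :
    mvLaplacian ((linF y)^4) = C (12 * ∑ i, y i ^ 2) * (linF y)^2 := by
  rw [mvLaplacian]
  have h1 : ∀ i : Fin n, pderiv i (pderiv i ((linF y)^4))
      = C 12 * (linF y)^2 * C (y i)^2 := by
    intro i
    simp only [Derivation.leibniz_pow, Derivation.leibniz, pderiv_linF, smul_eq_mul,
      map_nsmul, map_mul, pderiv_C, smul_smul, nsmul_eq_mul, mul_zero, zero_add,
      add_zero, zero_mul, map_add, pderiv_nat]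
    norm_num
    have : (C 12 : MvPolynomial (Fin n) ℝ) = ((12:ℕ) : MvPolynomial (Fin n) ℝ) := by
      norm_cast
    rw [this]; push_cast; ring
  rw [Finset.sum_congr rfl fun i _ => h1 i, ← Finset.mul_sum, sum_C_sq, map_mul]
  ring


lemma pderiv_two {n : ℕ} (i : Fin n) :
    pderiv i (2 : MvPolynomial (Fin n) ℝ) = 0 := by
  rw [show (2 : MvPolynomial (Fin n) ℝ) = ((2:ℕ) : MvPolynomial (Fin n) ℝ) by norm_cast]
  exact pderiv_nat i 2

lemma lap_S2 {n : ℕ} :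
    mvLaplacian ((sqF n)^2) = C (4*(n:ℝ)+8) * sqF n := by
  rw [mvLaplacian]
  have h1 : ∀ i : Fin n, pderiv i (pderiv i ((sqF n)^2))
      = C 8 * X i^2 + C 4 * sqF n := by
    intro i
    simp only [Derivation.leibniz_pow, Derivation.leibniz, pderiv_sqF, pderiv_X_self,
      smul_eq_mul, map_nsmul, map_mul, map_add, nsmul_eq_mul, pderiv_two, mul_zero,
      zero_add, add_zero, zero_mul, mul_one]
    have hC8 : (C 8 : MvPolynomial (Fin n) ℝ) = ((8:ℕ) : MvPolynomial (Fin n) ℝ) := by norm_cast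
    have hC4 : (C 4 : MvPolynomial (Fin n) ℝ) = ((4:ℕ) : MvPolynomial (Fin n) ℝ) := by norm_cast
    rw [hC8, hC4]; push_cast; rw [pderiv_two]; ring
  rw [Finset.sum_congr rfl fun i _ => h1 i, Finset.sum_add_distrib, ← Finset.mul_sum]
  rw [show (∑ i : Fin n, (X i : MvPolynomial (Fin n) ℝ)^2) = sqF n from rfl]
  rw [Finset.sum_const, Finset.card_univ, Fintype.card_fin, nsmul_eq_mul]
  rw [show ((n:ℕ) : MvPolynomial (Fin n) ℝ) = C (n:ℝ) from (C_eq_coe_nat n).symm]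
  rw [show (C (4*(n:ℝ)+8) : MvPolynomial (Fin n) ℝ) = C (n:ℝ) * C 4 + C 8 by
    rw [← map_mul, ← map_add]; ring_nf]
  ring

lemma lap_SL2 {n : ℕ} (y : Fin n → ℝ) :
    mvLaplacian (sqF n * (linF y)^2)
      = C (2*(n:ℝ)+8) * (linF y)^2 + C (2 * ∑ i, y i ^ 2) * sqF n := by
  rw [mvLaplacian]
  have h1 : ∀ i : Fin n, pderiv i (pderiv i (sqF n * (linF y)^2))
      = C 2 * (linF y)^2 + C 8 * (C (y i) * X i) * linF y + C 2 * C (y i)^2 * sqF n := by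
    intro i
    simp only [Derivation.leibniz_pow, Derivation.leibniz, pderiv_sqF, pderiv_linF,
      pderiv_X_self, smul_eq_mul, map_nsmul, map_mul, map_add, nsmul_eq_mul, pderiv_two,
      pderiv_C, mul_zero, zero_add, add_zero, zero_mul, mul_one]
    have hC8 : (C 8 : MvPolynomial (Fin n) ℝ) = ((8:ℕ) : MvPolynomial (Fin n) ℝ) := by norm_cast
    have hC2 : (C 2 : MvPolynomial (Fin n) ℝ) = ((2:ℕ) : MvPolynomial (Fin n) ℝ) := by norm_cast
    rw [hC8, hC2]; push_cast; rw [pderiv_two]; ring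
  rw [Finset.sum_congr rfl fun i _ => h1 i]
  rw [Finset.sum_add_distrib, Finset.sum_add_distrib]
  rw [Finset.sum_const, Finset.card_univ, Fintype.card_fin, nsmul_eq_mul]
  have hsum2 : (∑ i : Fin n, C 8 * (C (y i) * X i) * linF y)
      = C 8 * linF y * linF y := by
    rw [← Finset.sum_mul, ← Finset.mul_sum, ← linF]
  have hsum3 : (∑ i : Fin n, C 2 * C (y i)^2 * sqF n)
      = C 2 * C (∑ i, y i ^ 2) * sqF n := by
    rw [← Finset.sum_mul, ← Finset.mul_sum, sum_C_sq]
  rw [hsum2, hsum3]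
  rw [show ((n:ℕ) : MvPolynomial (Fin n) ℝ) = C (n:ℝ) from (C_eq_coe_nat n).symm]
  rw [show (C (2*(n:ℝ)+8) : MvPolynomial (Fin n) ℝ) = C (n:ℝ) * C 2 + C 8 by
    rw [← map_mul, ← map_add]; ring_nf]
  rw [show (C (2 * ∑ i, y i ^ 2) : MvPolynomial (Fin n) ℝ) = C 2 * C (∑ i, y i ^ 2) by
    rw [← map_mul]]
  ring

lemma mvLaplacian_add {n : ℕ} (f g : MvPolynomial (Fin n) ℝ) :
    mvLaplacian (f + g) = mvLaplacian f + mvLaplacian g := by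
  simp [mvLaplacian, Finset.sum_add_distrib]

lemma mvLaplacian_Cmul {n : ℕ} (c : ℝ) (f : MvPolynomial (Fin n) ℝ) :
    mvLaplacian (C c * f) = C c * mvLaplacian f := by
  simp only [mvLaplacian, pderiv_C_mul, Finset.mul_sum]

noncomputable def desPoly (n : ℕ) (y : Fin n → ℝ) : MvPolynomial (Fin n) ℝ :=
  (linF y)^4 + C (-(6/((n:ℝ)+4))) * (sqF n * (linF y)^2)
    + C (3/(((n:ℝ)+2)*((n:ℝ)+4))) * (sqF n)^2

lemma desPoly_harmonic (n : ℕ) (y : Fin n → ℝ) (hy : ∑ i, y i ^ 2 = 1) :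
    mvLaplacian (desPoly n y) = 0 := by
  have hn4 : ((n:ℝ)+4) ≠ 0 := by positivity
  have hn2 : ((n:ℝ)+2) ≠ 0 := by positivity
  rw [desPoly, mvLaplacian_add, mvLaplacian_add, mvLaplacian_Cmul, mvLaplacian_Cmul,
    lap_L4, lap_SL2, lap_S2, hy]
  have hA : (12 : ℝ) * 1 + (-(6/((n:ℝ)+4))) * (2*(n:ℝ)+8) = 0 := by
    field_simp; ring
  have hB : (-(6/((n:ℝ)+4))) * (2*1) + (3/(((n:ℝ)+2)*((n:ℝ)+4))) * (4*(n:ℝ)+8) = 0 := by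
    field_simp
    ring
  have hA0 : (C (12*1) : MvPolynomial (Fin n) ℝ) + C (-(6/((n:ℝ)+4))) * C (2*(n:ℝ)+8) = 0 := by
    rw [← map_mul, ← map_add, hA, map_zero]
  have hB0 : (C (-(6/((n:ℝ)+4))) : MvPolynomial (Fin n) ℝ) * C (2*1)
      + C (3/(((n:ℝ)+2)*((n:ℝ)+4))) * C (4*(n:ℝ)+8) = 0 := by
    rw [← map_mul, ← map_mul, ← map_add, hB, map_zero]
  calc C (12*1) * (linF y)^2
      + C (-(6/((n:ℝ)+4))) * (C (2*(n:ℝ)+8) * (linF y)^2 + C (2*1) * sqF n)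
      + C (3/(((n:ℝ)+2)*((n:ℝ)+4))) * (C (4*(n:ℝ)+8) * sqF n)
      = ((C (12*1) : MvPolynomial (Fin n) ℝ) + C (-(6/((n:ℝ)+4))) * C (2*(n:ℝ)+8)) * (linF y)^2
        + ((C (-(6/((n:ℝ)+4))) : MvPolynomial (Fin n) ℝ) * C (2*1)
          + C (3/(((n:ℝ)+2)*((n:ℝ)+4))) * C (4*(n:ℝ)+8)) * sqF n := by ring
    _ = 0 := by rw [hA0, hB0]; ring

lemma desPoly_homog (n : ℕ) (y : Fin n → ℝ) : (desPoly n y).IsHomogeneous 4 := by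
  have hL : (linF y).IsHomogeneous 1 :=
    MvPolynomial.IsHomogeneous.sum _ _ _ fun i _ => MvPolynomial.isHomogeneous_C_mul_X _ _
  have hS : (sqF n).IsHomogeneous 2 :=
    MvPolynomial.IsHomogeneous.sum _ _ _ fun i _ => MvPolynomial.isHomogeneous_X_pow _ _
  have h1 : ((linF y)^4).IsHomogeneous 4 := by simpa using hL.pow 4
  have h2 : (sqF n * (linF y)^2).IsHomogeneous 4 := by
    have := hS.mul (hL.pow 2); simpa using this
  have h3 : ((sqF n)^2).IsHomogeneous 4 := by simpa using hS.pow 2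
  exact (h1.add ((h2.C_mul _))).add (h3.C_mul _)

lemma eval_linF {n : ℕ} (x y : Fin n → ℝ) :
    MvPolynomial.eval x (linF y) = ∑ i, x i * y i := by
  simp [linF, mul_comm]

lemma eval_sqF {n : ℕ} (x : Fin n → ℝ) :
    MvPolynomial.eval x (sqF n) = ∑ i, x i ^ 2 := by
  simp [sqF]

lemma eval_desPoly {n : ℕ} (x y : Fin n → ℝ) :
    MvPolynomial.eval x (desPoly n y)
      = (∑ i, x i * y i)^4 - (6/((n:ℝ)+4)) * (∑ i, x i ^ 2) * (∑ i, x i * y i)^2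
        + (3/(((n:ℝ)+2)*((n:ℝ)+4))) * (∑ i, x i ^ 2)^2 := by
  simp only [desPoly, map_add, map_mul, map_pow, eval_C, eval_linF, eval_sqF]
  ring
/-- A finite nonempty subset `X` of the unit sphere `S^{n-1} ⊆ ℝ^n` is a spherical design of
harmonic index `t` if `∑_{x ∈ X} f(x) = 0` for every harmonic homogeneous polynomial `f`
of degree `t`. -/
def IsHarmonicIndexDesign (n t : ℕ) (X : Finset (Fin n → ℝ)) : Prop :=
  X.Nonempty ∧ (∀ x ∈ X, ∑ i, x i ^ 2 = 1) ∧
    ∀ f : MvPolynomial (Fin n) ℝ, mvLaplacian f = 0 → f.IsHomogeneous t →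
      ∑ x ∈ X, MvPolynomial.eval x f = 0


lemma design_inner_sq (n : ℕ) (X : Finset (Fin n → ℝ))
    (hcard : 6 * X.card = (n+1) * (n+2))
    (hD : IsHarmonicIndexDesign n 4 X) :
    ∀ x ∈ X, ∀ y ∈ X, x ≠ y → (∑ i, x i * y i)^2 = 3 / ((n:ℝ) + 4) := by
  obtain ⟨hne, hunit, hdes⟩ := hD
  have hn4 : ((n:ℝ)+4) ≠ 0 := by positivity
  have hn2 : ((n:ℝ)+2) ≠ 0 := by positivity
  set a : ℝ := 6/((n:ℝ)+4) with ha
  set b : ℝ := 3/(((n:ℝ)+2)*((n:ℝ)+4)) with hb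
  set N : ℕ := X.card with hNdef
  have hN : 6*(N:ℝ) = ((n:ℝ)+1)*((n:ℝ)+2) := by exact_mod_cast hcard
  have hNval : (N:ℝ) = ((n:ℝ)+1)*((n:ℝ)+2)/6 := by linarith
  -- the design applied to desPoly
  have key : ∀ y ∈ X, ∑ x ∈ X,
      ((∑ i, x i * y i)^4 - a * (∑ i, x i * y i)^2 + b) = 0 := by
    intro y hy
    have h := hdes (desPoly n y) (desPoly_harmonic n y (hunit y hy)) (desPoly_homog n y)
    have he : ∀ x ∈ X, MvPolynomial.eval x (desPoly n y)
        = (∑ i, x i * y i)^4 - a * (∑ i, x i * y i)^2 + b := by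
      intro x hx
      rw [eval_desPoly, hunit x hx, ha, hb]
      ring
    rwa [Finset.sum_congr rfl he] at h
  -- split off the diagonal
  have hsplit : ∀ y ∈ X, ∑ x ∈ X,
      ((∑ i, x i * y i)^4 - a * (∑ i, x i * y i)^2 + b)
      = (1 - a + b) + ((∑ x ∈ X.erase y, ((∑ i, x i * y i)^2 - a/2)^2)
          + ((N:ℝ) - 1) * (b - a^2/4)) := by
    intro y hy
    rw [← Finset.add_sum_erase X _ hy]
    have hyy : (∑ i, y i * y i) = 1 := by
      rw [← hunit y hy]; exact Finset.sum_congr rfl fun i _ => (sq (y i)).symm ▸ by ring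
    congr 1
    · rw [hyy]; ring
    · have : ∀ x ∈ X.erase y,
          ((∑ i, x i * y i)^4 - a * (∑ i, x i * y i)^2 + b)
          = ((∑ i, x i * y i)^2 - a/2)^2 + (b - a^2/4) := by
        intro x _; ring
      rw [Finset.sum_congr rfl this, Finset.sum_add_distrib, Finset.sum_const,
        Finset.card_erase_of_mem hy, nsmul_eq_mul]
      congr 1
      have hN1 : 1 ≤ N := Finset.card_pos.mpr hne
      rw [← hNdef]; push_cast [Nat.cast_sub hN1]
      ring
  -- total sum
  have h0 : ∑ y ∈ X, ∑ x ∈ X,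
      ((∑ i, x i * y i)^4 - a * (∑ i, x i * y i)^2 + b) = 0 :=
    Finset.sum_eq_zero key
  rw [Finset.sum_congr rfl hsplit] at h0
  have hre : ∀ y ∈ X, (1 - a + b) + ((∑ x ∈ X.erase y, ((∑ i, x i * y i)^2 - a/2)^2)
        + ((N:ℝ) - 1) * (b - a^2/4))
      = (∑ x ∈ X.erase y, ((∑ i, x i * y i)^2 - a/2)^2)
        + ((1 - a + b) + ((N:ℝ) - 1) * (b - a^2/4)) := fun _ _ => by ring
  rw [Finset.sum_congr rfl hre, Finset.sum_add_distrib, Finset.sum_const, nsmul_eq_mul] at h0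
  -- Fisher identity
  have hFisher : (N:ℝ) * ((1 - a + b) + ((N:ℝ) - 1) * (b - a^2/4)) = 0 := by
    rw [hNval, ha, hb]
    field_simp
    ring
  have hsq0 : ∑ y ∈ X, ∑ x ∈ X.erase y, ((∑ i, x i * y i)^2 - a/2)^2 = 0 := by
    linarith [h0, hFisher]
  have hinner : ∀ y ∈ X, ∀ x ∈ X.erase y, ((∑ i, x i * y i)^2 - a/2)^2 = 0 := by
    intro y hy x hx
    have houter := (Finset.sum_eq_zero_iff_of_nonneg
      (fun y _ => Finset.sum_nonneg fun x _ => sq_nonneg _)).mp hsq0 y hy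
    exact (Finset.sum_eq_zero_iff_of_nonneg (fun x _ => sq_nonneg _)).mp houter x hx
  intro x hx y hy hxy
  have := hinner y hy x (Finset.mem_erase.mpr ⟨hxy, hx⟩)
  have h2 : (∑ i, x i * y i)^2 = a/2 := by
    have := sq_eq_zero_iff.mp this
    linarith
  rw [h2, ha]
  ring

lemma no_design_dim8 :
    ¬ ∃ X : Finset (Fin 8 → ℝ), X.card = 15 ∧ IsHarmonicIndexDesign 8 4 X := by
  rintro ⟨X, hcard, hD⟩
  have hip0 := design_inner_sq 8 X (by rw [hcard]) hD
  have hip : ∀ x ∈ X, ∀ y ∈ X, x ≠ y → (∑ i, x i * y i)^2 = 1/4 := by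
    intro x hx y hy hxy
    have := hip0 x hx y hy hxy
    norm_num at this
    convert this using 2
  obtain ⟨hne, hunit, -⟩ := hD
  obtain ⟨v1, hv1⟩ := hne
  set Y := X.erase v1 with hYdef
  have hYcard : Y.card = 14 := by rw [hYdef, Finset.card_erase_of_mem hv1, hcard]
  have hYX : ∀ y ∈ Y, y ∈ X := fun y hy => Finset.mem_of_mem_erase hy
  have hYne : ∀ y ∈ Y, y ≠ v1 := fun y hy => (Finset.mem_erase.mp hy).1
  -- self inner products
  have hself : ∀ x ∈ X, ∑ i, x i * x i = 1 := by
    intro x hx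
    rw [← hunit x hx]
    exact Finset.sum_congr rfl fun i _ => by ring
  -- normalized representatives
  set w : (Fin 8 → ℝ) → (Fin 8 → ℝ) :=
    fun y => if 0 < ∑ i, v1 i * y i then y else -y with hwdef
  have hw_pm : ∀ y, w y = y ∨ w y = -y := by
    intro y; rw [hwdef]; dsimp only; split
    · exact Or.inl rfl
    · exact Or.inr rfl
  have hw_self : ∀ y ∈ Y, ∑ i, w y i * w y i = 1 := by
    intro y hy
    rcases hw_pm y with h | h <;> rw [h]
    · exact hself y (hYX y hy)
    · simpa using hself y (hYX y hy)
  have hw1 : ∀ y ∈ Y, ∑ i, v1 i * w y i = 1/2 := by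
    intro y hy
    have hs : (∑ i, v1 i * y i)^2 = 1/4 := hip v1 hv1 y (hYX y hy) (Ne.symm (hYne y hy))
    have hcases : (∑ i, v1 i * y i) = 1/2 ∨ (∑ i, v1 i * y i) = -(1/2) := by
      have : ((∑ i, v1 i * y i) - 1/2) * ((∑ i, v1 i * y i) + 1/2) = 0 := by nlinarith [hs]
      rcases mul_eq_zero.mp this with h | h
      · left; linarith
      · right; linarith
    rw [hwdef]; dsimp only; split
    · rcases hcases with h | h
      · exact h
      · exfalso; rename_i hpos; rw [h] at hpos; norm_num at hpos
    · rcases hcases with h | h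
      · exfalso; rename_i hpos; rw [h] at hpos; norm_num at hpos
      · simp only [Pi.neg_apply, mul_neg, Finset.sum_neg_distrib]
        rw [h]; norm_num
  have hw_sq : ∀ y ∈ Y, ∀ z ∈ Y, y ≠ z → (∑ i, w y i * w z i)^2 = 1/4 := by
    intro y hy z hz hyz
    have h0 : (∑ i, y i * z i)^2 = 1/4 := hip y (hYX y hy) z (hYX z hz) hyz
    rcases hw_pm y with h1 | h1 <;> rcases hw_pm z with h2 | h2 <;> rw [h1, h2]
    · exact h0
    · simp only [Pi.neg_apply, mul_neg, Finset.sum_neg_distrib, neg_sq]; exact h0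
    · simp only [Pi.neg_apply, neg_mul, Finset.sum_neg_distrib, neg_sq]; exact h0
    · simp only [Pi.neg_apply, mul_neg, neg_mul, neg_neg]; exact h0
  -- the projected vectors
  set u : (Fin 8 → ℝ) → (Fin 8 → ℝ) := fun y => fun i => w y i - (1/2) * v1 i with hudef
  have hip_u : ∀ y z, (∑ i, u y i * u z i)
      = (∑ i, w y i * w z i) - (1/2) * (∑ i, v1 i * w y i)
        - (1/2) * (∑ i, v1 i * w z i) + (1/4) * (∑ i, v1 i * v1 i) := by
    intro y z
    rw [hudef]
    dsimp only
    rw [Finset.mul_sum, Finset.mul_sum, Finset.mul_sum, ← Finset.sum_sub_distrib,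
      ← Finset.sum_sub_distrib, ← Finset.sum_add_distrib]
    exact Finset.sum_congr rfl fun i _ => by ring
  have hu_self : ∀ y ∈ Y, ∑ i, u y i * u y i = 3/4 := by
    intro y hy
    rw [hip_u, hw_self y hy, hw1 y hy, hself v1 hv1]
    norm_num
  have hu_cross : ∀ y ∈ Y, ∀ z ∈ Y, y ≠ z →
      (∑ i, u y i * u z i) = 1/4 ∨ (∑ i, u y i * u z i) = -(3/4) := by
    intro y hy z hz hyz
    have h1 := hw_sq y hy z hz hyz
    have h2 : (∑ i, w y i * w z i) = 1/2 ∨ (∑ i, w y i * w z i) = -(1/2) := by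
      have : ((∑ i, w y i * w z i) - 1/2) * ((∑ i, w y i * w z i) + 1/2) = 0 := by
        nlinarith [h1]
      rcases mul_eq_zero.mp this with h | h
      · left; linarith
      · right; linarith
    rw [hip_u, hw1 y hy, hw1 z hz, hself v1 hv1]
    rcases h2 with h | h <;> rw [h] <;> [left; right] <;> norm_num
  by_cases hA : ∃ y ∈ Y, ∃ z ∈ Y, y ≠ z ∧ (∑ i, u y i * u z i) = -(3/4)
  · -- Case A : an antipodal pair exists
    obtain ⟨y, hy, z, hz, hyz, hyz34⟩ := hA
    have hzero : ∀ i, u y i + u z i = 0 := by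
      have hsum : ∑ i, (u y i + u z i)^2 = 0 := by
        have expand : ∀ i, (u y i + u z i)^2
            = u y i * u y i + 2 * (u y i * u z i) + u z i * u z i := fun i => by ring
        rw [Finset.sum_congr rfl fun i _ => expand i, Finset.sum_add_distrib,
          Finset.sum_add_distrib, ← Finset.mul_sum, hu_self y hy, hu_self z hz, hyz34]
        norm_num
      intro i
      have := (Finset.sum_eq_zero_iff_of_nonneg
        (fun i _ => sq_nonneg (u y i + u z i))).mp hsum i (Finset.mem_univ i)
      exact pow_eq_zero_iff (n := 2) (by norm_num) |>.mp this
    -- a third point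
    have hcard2 : 0 < ((Y.erase y).erase z).card := by
      have h1 : (Y.erase y).card = 13 := by
        rw [Finset.card_erase_of_mem hy, hYcard]
      have h2 : (Y.erase y).card - 1 ≤ ((Y.erase y).erase z).card :=
        Finset.pred_card_le_card_erase
      omega
    obtain ⟨l, hl⟩ := Finset.card_pos.mp hcard2
    have hlz : l ≠ z := (Finset.mem_erase.mp hl).1
    have hly : l ≠ y := (Finset.mem_erase.mp (Finset.mem_of_mem_erase hl)).1
    have hlY : l ∈ Y := Finset.mem_of_mem_erase (Finset.mem_of_mem_erase hl)
    have hsum0 : (∑ i, u y i * u l i) + (∑ i, u z i * u l i) = 0 := by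
      rw [← Finset.sum_add_distrib]
      rw [Finset.sum_eq_zero]
      intro i _
      linear_combination u l i * hzero i
    rcases hu_cross y hy l hlY (Ne.symm hly) with h1 | h1 <;>
      rcases hu_cross z hz l hlY (Ne.symm hlz) with h2 | h2 <;>
      rw [h1, h2] at hsum0 <;> norm_num at hsum0
  · -- Case B : all inner products equal 1/4
    push_neg at hA
    have hcr : ∀ y ∈ Y, ∀ z ∈ Y, y ≠ z → (∑ i, u y i * u z i) = 1/4 := by
      intro y hy z hz hyz
      rcases hu_cross y hy z hz hyz with h | h
      · exact h
      · exact absurd h (hA y hy z hz hyz)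
    -- the 14 vectors u y, y ∈ Y, are linearly dependent in ℝ^8
    have hdep : ¬ LinearIndependent ℝ (fun y : ↥Y => u ↑y) := by
      intro h
      have hle := h.fintype_card_le_finrank
      rw [Module.finrank_fin_fun, Fintype.card_coe, hYcard] at hle
      omega
    obtain ⟨g, hg0, j, hgj⟩ := Fintype.not_linearIndependent_iff.mp hdep
    have hfun : ∀ i, (∑ y : ↥Y, g y * u (↑y) i) = 0 := by
      intro i
      have := congrFun hg0 i
      simpa [Finset.sum_apply] using this
    have hz1 : ∀ z : ↥Y, (∑ y : ↥Y, g y * (∑ i, u ↑y i * u ↑z i)) = 0 := by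
      intro z
      have : ∀ y : ↥Y, g y * (∑ i, u ↑y i * u ↑z i)
          = ∑ i, (g y * u ↑y i) * u ↑z i := by
        intro y; rw [Finset.mul_sum]; exact Finset.sum_congr rfl fun i _ => by ring
      rw [Finset.sum_congr rfl fun y _ => this y, Finset.sum_comm]
      rw [Finset.sum_eq_zero]
      intro i _
      rw [← Finset.sum_mul, hfun i, zero_mul]
    have hT : (∑ z : ↥Y, g z * ∑ y : ↥Y, g y * (∑ i, u ↑y i * u ↑z i)) = 0 := by
      rw [Finset.sum_eq_zero]; intro z _; rw [hz1 z, mul_zero]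
    -- expand
    have hexp : ∀ z : ↥Y, (∑ y : ↥Y, g y * (∑ i, u ↑y i * u ↑z i))
        = g z * (3/4) + (∑ y ∈ Finset.univ.erase z, g y * (1/4)) := by
      intro z
      rw [← Finset.add_sum_erase _ _ (Finset.mem_univ z)]
      congr 1
      · rw [hu_self ↑z z.2]
      · refine Finset.sum_congr rfl fun y hy => ?_
        have hyz : (y : Fin 8 → ℝ) ≠ ↑z := by
          intro hc
          exact (Finset.mem_erase.mp hy).1 (Subtype.ext hc)
        rw [hcr ↑y y.2 ↑z z.2 hyz]
    set S1 : ℝ := ∑ z : ↥Y, g z with hS1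
    set S2 : ℝ := ∑ z : ↥Y, g z * g z with hS2
    have herase : ∀ z : ↥Y, (∑ y ∈ Finset.univ.erase z, g y * (1/4))
        = S1 * (1/4) - g z * (1/4) := by
      intro z
      rw [Finset.sum_erase_eq_sub (Finset.mem_univ z), ← Finset.sum_mul]
    have hfinal : (1/2) * S2 + (1/4) * (S1 * S1) = 0 := by
      have h1 : ∀ z : ↥Y, g z * (∑ y : ↥Y, g y * (∑ i, u ↑y i * u ↑z i))
          = (1/2) * (g z * g z) + (1/4) * (g z * S1) := by
        intro z
        rw [hexp z, herase z]
        ring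
      rw [Finset.sum_congr rfl fun z _ => h1 z] at hT
      rw [Finset.sum_add_distrib, ← Finset.mul_sum, ← Finset.mul_sum] at hT
      rw [← hS2] at hT
      have : (∑ z : ↥Y, g z * S1) = S1 * S1 := by
        rw [← Finset.sum_mul]
      rw [this] at hT
      linarith [hT]
    have hj : g j * g j ≤ S2 :=
      Finset.single_le_sum (fun y _ => mul_self_nonneg (g y)) (Finset.mem_univ j)
    have hjpos : 0 < g j * g j := mul_self_pos.mpr hgj
    nlinarith [mul_self_nonneg S1]

lemma no_config_irr (n N : ℕ) (hnN : n < N) (h3 : ¬ ((3:ℤ) ∣ ((n:ℤ) + 4)))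
    (v : Fin N → (Fin n → ℝ)) (hvinj : Function.Injective v)
    (hself : ∀ k, ∑ i, v k i * v k i = 1)
    (hvip : ∀ k l, k ≠ l → (∑ i, v k i * v l i)^2 = 3/((n:ℝ)+4)) : False := by
  have hn4 : (0:ℝ) < (n:ℝ) + 4 := by positivity
  set α : ℝ := Real.sqrt (3/((n:ℝ)+4)) with hα
  set x : ℝ := Real.sqrt (((n:ℝ)+4)/3) with hxdef
  have hαpos : 0 < α := Real.sqrt_pos.mpr (by positivity)
  have hα2 : α^2 = 3/((n:ℝ)+4) := Real.sq_sqrt (by positivity)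
  have hx2 : x^2 = ((n:ℝ)+4)/3 := Real.sq_sqrt (by positivity)
  have hxα : x * α = 1 := by
    rw [hα, hxdef, ← Real.sqrt_mul (by positivity)]
    rw [show (((n:ℝ)+4)/3) * (3/((n:ℝ)+4)) = 1 by field_simp]
    exact Real.sqrt_one
  set E : Matrix (Fin N) (Fin N) ℤ := Matrix.of fun k l =>
    if k = l then 0 else if 0 < ∑ i, v k i * v l i then 1 else -1 with hE
  set S : Matrix (Fin N) (Fin N) ℝ := E.map (algebraMap ℤ ℝ) with hS
  set G : Matrix (Fin N) (Fin N) ℝ := α • S + 1 with hG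
  have hSdiag : ∀ k, S k k = 0 := by
    intro k; rw [hS, Matrix.map_apply, hE]; simp
  have hGip : ∀ k l, G k l = ∑ i, v k i * v l i := by
    intro k l
    by_cases hkl : k = l
    · subst hkl
      rw [hG, Matrix.add_apply, Matrix.smul_apply, hSdiag k, Matrix.one_apply_eq, hself k]
      simp
    · have hsq : (∑ i, v k i * v l i)^2 = α^2 := by rw [hα2]; exact hvip k l hkl
      have hcases : (∑ i, v k i * v l i) = α ∨ (∑ i, v k i * v l i) = -α := by
        have hfac : ((∑ i, v k i * v l i) - α) * ((∑ i, v k i * v l i) + α) = 0 := by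
          nlinarith [hsq]
        rcases mul_eq_zero.mp hfac with h | h
        · left; linarith
        · right; linarith
      rw [hG, Matrix.add_apply, Matrix.smul_apply, Matrix.one_apply_ne hkl, hS,
        Matrix.map_apply, hE]
      simp only [Matrix.of_apply, if_neg hkl]
      rcases hcases with h | h
      · rw [if_pos (by rw [h]; exact hαpos)]
        rw [h]
        simp [smul_eq_mul]
      · rw [if_neg (by rw [h]; simp; linarith [hαpos])]
        rw [h]
        simp [smul_eq_mul]
  -- the Gram matrix is singular
  have hdep : ¬ LinearIndependent ℝ v := by
    intro h
    have hle := h.fintype_card_le_finrank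
    rw [Module.finrank_fin_fun, Fintype.card_fin] at hle
    omega
  obtain ⟨g, hg0, k0, hk0⟩ := Fintype.not_linearIndependent_iff.mp hdep
  have hgfun : ∀ i, (∑ k, g k * v k i) = 0 := by
    intro i
    have := congrFun hg0 i
    simpa [Finset.sum_apply] using this
  have hmv : G.mulVec g = 0 := by
    funext k
    show ∑ l, G k l * g l = 0
    rw [Finset.sum_congr rfl fun l _ => by rw [hGip k l]]
    have : ∀ l, (∑ i, v k i * v l i) * g l = ∑ i, v k i * (g l * v l i) := by
      intro l; rw [Finset.sum_mul]; exact Finset.sum_congr rfl fun i _ => by ring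
    rw [Finset.sum_congr rfl fun l _ => this l, Finset.sum_comm]
    rw [Finset.sum_eq_zero]
    intro i _
    rw [← Finset.mul_sum, hgfun i, mul_zero]
  have hgne : g ≠ 0 := by
    intro hc; rw [hc] at hk0; exact hk0 rfl
  have hdet : G.det = 0 := Matrix.exists_mulVec_eq_zero_iff.mp ⟨g, hgne, hmv⟩
  -- -x is an algebraic integer
  have haev : Polynomial.aeval (-x) E.charpoly = 0 := by
    rw [Polynomial.aeval_def, ← Polynomial.eval_map, ← Matrix.charpoly_map E (algebraMap ℤ ℝ)]
    rw [← hS, Matrix.charpoly, ← Polynomial.coe_evalRingHom, RingHom.map_det]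
    have hcm : (Matrix.charmatrix S).map (Polynomial.evalRingHom (-x)) = -(x • G) := by
      ext k l
      by_cases hkl : k = l
      · subst hkl
        rw [Matrix.map_apply, Matrix.charmatrix_apply_eq]
        simp only [Polynomial.coe_evalRingHom, Polynomial.eval_sub, Polynomial.eval_X,
          Polynomial.eval_C, Matrix.neg_apply, Matrix.smul_apply, smul_eq_mul]
        rw [hSdiag k, hGip k k, hself k]
        ring
      · rw [Matrix.map_apply, Matrix.charmatrix_apply_ne _ _ _ hkl]
        simp only [Polynomial.coe_evalRingHom, Polynomial.eval_neg, Polynomial.eval_C,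
          Matrix.neg_apply, Matrix.smul_apply, smul_eq_mul]
        rw [show G k l = α * S k l from by
          rw [hG, Matrix.add_apply, Matrix.smul_apply, Matrix.one_apply_ne hkl, add_zero,
            smul_eq_mul]]
        rw [← mul_assoc, hxα, one_mul]
    rw [RingHom.mapMatrix_apply, hcm, ← neg_smul, Matrix.det_smul, hdet, mul_zero]
  have hint : IsIntegral ℤ (-x) := ⟨E.charpoly, E.charpoly_monic, haev⟩
  have hint2 : IsIntegral ℤ (((n:ℝ)+4)/3) := by
    have h := hint.pow 2
    rwa [show (-x)^2 = ((n:ℝ)+4)/3 by rw [show (-x)^2 = x^2 by ring, hx2]] at h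
  have hQval : (algebraMap ℚ ℝ) (((n:ℚ)+4)/3) = ((n:ℝ)+4)/3 := by
    push_cast
    norm_num
  have hQ : IsIntegral ℤ (((n:ℚ)+4)/3) := by
    rw [← isIntegral_algebraMap_iff (R := ℤ) (A := ℚ) (B := ℝ) (algebraMap ℚ ℝ).injective, hQval]
    exact hint2
  letI : IsIntegrallyClosed ℤ := GCDMonoid.toIsIntegrallyClosed
  obtain ⟨z, hz⟩ := IsIntegrallyClosed.isIntegral_iff.mp hQ
  have hzq : (3:ℚ) * (z:ℚ) = (n:ℚ) + 4 := by
    have h1 : (z:ℚ) = ((n:ℚ)+4)/3 := by exact_mod_cast hz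
    rw [h1]; ring
  have hzz : (3:ℤ) * z = (n:ℤ) + 4 := by exact_mod_cast hzq
  exact h3 ⟨z, hzz.symm⟩

lemma no_design_irr (n N : ℕ) (hnN : n < N) (h3 : ¬ ((3:ℤ) ∣ ((n:ℤ)+4)))
    (hfis : 6 * N = (n+1)*(n+2)) :
    ¬ ∃ X : Finset (Fin n → ℝ), X.card = N ∧ IsHarmonicIndexDesign n 4 X := by
  rintro ⟨X, hcard, hD⟩
  have hip := design_inner_sq n X (by rw [hcard]; exact hfis) hD
  obtain ⟨hne, hunit, -⟩ := hD
  set e := X.equivFin with he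
  set v : Fin N → (Fin n → ℝ) := fun k => ↑(e.symm (Fin.cast hcard.symm k)) with hv
  have hvX : ∀ k, v k ∈ X := fun k => (e.symm (Fin.cast hcard.symm k)).2
  have hvinj : Function.Injective v := by
    intro k l h
    have h1 : e.symm (Fin.cast hcard.symm k) = e.symm (Fin.cast hcard.symm l) :=
      Subtype.coe_injective h
    have h2 := e.symm.injective h1
    exact (Fin.cast_injective hcard.symm) h2
  have hself : ∀ k, ∑ i, v k i * v k i = 1 := by
    intro k
    rw [← hunit (v k) (hvX k)]
    exact Finset.sum_congr rfl fun i _ => by ring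
  have hvip : ∀ k l, k ≠ l → (∑ i, v k i * v l i)^2 = 3/((n:ℝ)+4) := by
    intro k l hkl
    exact hip (v k) (hvX k) (v l) (hvX l) (fun hc => hkl (hvinj hc))
  exact no_config_irr n N hnN h3 v hvinj hself hvip

/-- there is no tight harmonic index `4`-design for `n = 7` (12 points on `S⁶`),
`n = 8` (15 points on `S⁷`), nor `n = 10` (22 points on `S⁹`). -/
theorem no_tight_harmonic_index_four_design_dim_seven_eight_ten :
    (¬ ∃ X : Finset (Fin 7 → ℝ), X.card = 12 ∧ IsHarmonicIndexDesign 7 4 X) ∧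
    (¬ ∃ X : Finset (Fin 8 → ℝ), X.card = 15 ∧ IsHarmonicIndexDesign 8 4 X) ∧
    (¬ ∃ X : Finset (Fin 10 → ℝ), X.card = 22 ∧ IsHarmonicIndexDesign 10 4 X) := by
  refine ⟨?_, no_design_dim8, ?_⟩
  · exact no_design_irr 7 12 (by norm_num) (by decide) (by norm_num)
  · exact no_design_irr 10 22 (by norm_num) (by decide) (by norm_num)
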